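/- For q ≥ 1, κ ≥ 0 and symmetric matrices A, B in R^{3×3}, the regularized stress map D ↦ (κ + |D|²)^{(q-2)/2} D is monotone: ((κ+|A|²)^{(q-2)/2}A − (κ+|B|²)^{(q-2)/2}B) : (A − B) ≥ 0. -/
import Mathlib

open Matrix

/-- Frobenius inner product on 3×3 real matrices. -/
noncomputable def fdot (A B : Matrix (Fin 3) (Fin 3) ℝ) : ℝ := ∑ i, ∑ j, A i j * B i j

/-- Frobenius norm of a 3×3 real matrix. -/
noncomputable def fnorm (A : Matrix (Fin 3) (Fin 3) ℝ) : ℝ := Real.sqrt (∑ i, ∑ j, (A i j) ^ 2)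

/-- The regularized stress `(κ + |D|²)^{(q-2)/2} D`. -/
noncomputable def stressReg (q κ : ℝ) (D : Matrix (Fin 3) (Fin 3) ℝ) : Matrix (Fin 3) (Fin 3) ℝ :=
  (κ + (fnorm D) ^ 2) ^ ((q - 2) / 2) • D

lemma key_scalar {p κ a b : ℝ} (hp : -(1/2:ℝ) ≤ p) (hκ : 0 ≤ κ) (hb : 0 ≤ b) (hab : b ≤ a) :
    (κ + b^2) ^ p * b ≤ (κ + a^2) ^ p * a := by
  have ha : 0 ≤ a := hb.trans hab
  rcases eq_or_lt_of_le hb with hb0 | hb0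
  · rw [← hb0]
    have : (0:ℝ) ≤ (κ + a^2) ^ p * a := by positivity
    simpa using this
  have ha0 : 0 < a := lt_of_lt_of_le hb0 hab
  have hBb : 0 < κ + b^2 := by positivity
  have hBa : 0 < κ + a^2 := by positivity
  rcases le_or_gt 0 p with hp0 | hp0
  · have h1 : (κ + b^2)^p ≤ (κ + a^2)^p :=
      Real.rpow_le_rpow hBb.le (by nlinarith) hp0
    exact mul_le_mul h1 hab hb (Real.rpow_nonneg hBa.le p)
  · set r := -p with hr
    have hr0 : 0 < r := by simp only [hr]; linarith
    have hr2 : 2*r ≤ 1 := by simp only [hr]; linarith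
    have hX : 0 < (κ+a^2)^r := Real.rpow_pos_of_pos hBa r
    have hY : 0 < (κ+b^2)^r := Real.rpow_pos_of_pos hBb r
    have e1 : ((κ+a^2)^r)^2 = (κ+a^2)^(2*r) := by
      rw [← Real.rpow_natCast ((κ+a^2)^r) 2, ← Real.rpow_mul hBa.le]
      norm_num [mul_comm]
    have e2 : ((κ+b^2)^r)^2 = (κ+b^2)^(2*r) := by
      rw [← Real.rpow_natCast ((κ+b^2)^r) 2, ← Real.rpow_mul hBb.le]
      norm_num [mul_comm]
    have key2 : (κ+a^2)^(2*r) ≤ (κ+b^2)^(2*r) * ((κ+a^2)/(κ+b^2)) := by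
      have hsplit : (κ+a^2)^(2*r) = (κ+b^2)^(2*r) * ((κ+a^2)/(κ+b^2))^(2*r) := by
        rw [← Real.mul_rpow hBb.le (by positivity)]
        congr 1
        field_simp
      rw [hsplit]
      have hratio : 1 ≤ (κ+a^2)/(κ+b^2) := by
        rw [le_div_iff₀ hBb]; nlinarith
      have := Real.rpow_le_rpow_of_exponent_le hratio hr2
      rw [Real.rpow_one] at this
      have hpos : 0 < (κ+b^2)^(2*r) := Real.rpow_pos_of_pos hBb _
      nlinarith
    have claim : b * (κ+a^2)^r ≤ a * (κ+b^2)^r := by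
      have hsq : (b * (κ+a^2)^r)^2 ≤ (a * (κ+b^2)^r)^2 := by
        have hb2 : b^2 ≤ a^2 := by nlinarith
        have hba : b^2*(κ+a^2) ≤ a^2*(κ+b^2) := by nlinarith [mul_le_mul_of_nonneg_left hb2 hκ]
        have hpos : 0 < (κ+b^2)^(2*r) := Real.rpow_pos_of_pos hBb _
        calc (b * (κ+a^2)^r)^2 = b^2 * (κ+a^2)^(2*r) := by rw [mul_pow, e1]
          _ ≤ b^2 * ((κ+b^2)^(2*r) * ((κ+a^2)/(κ+b^2))) := by nlinarith
          _ = (κ+b^2)^(2*r) * (b^2*(κ+a^2)/(κ+b^2)) := by ring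
          _ ≤ (κ+b^2)^(2*r) * (a^2*(κ+b^2)/(κ+b^2)) := by gcongr
          _ = a^2 * (κ+b^2)^(2*r) := by field_simp
          _ = (a * (κ+b^2)^r)^2 := by rw [mul_pow, e2]
      have h1 : 0 ≤ b * (κ+a^2)^r := by positivity
      have h2 : 0 ≤ a * (κ+b^2)^r := by positivity
      nlinarith
    have hpneg : p = -r := by simp [hr]
    rw [hpneg, Real.rpow_neg hBb.le, Real.rpow_neg hBa.le]
    rw [inv_mul_eq_div, inv_mul_eq_div, div_le_div_iff₀ hY hX]
    linarith [claim]

theorem stmt1 (q κ : ℝ) (hq : 1 ≤ q) (hκ : 0 ≤ κ) (A B : Matrix (Fin 3) (Fin 3) ℝ)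
    (hA : Aᵀ = A) (hB : Bᵀ = B) :
    0 ≤ fdot (stressReg q κ A - stressReg q κ B) (A - B) := by
  set a := fnorm A with ha'
  set b := fnorm B with hb'
  have ha0 : 0 ≤ a := Real.sqrt_nonneg _
  have hb0 : 0 ≤ b := Real.sqrt_nonneg _
  set ca := (κ + a^2) ^ ((q-2)/2) with hca'
  set cb := (κ + b^2) ^ ((q-2)/2) with hcb'
  have hca0 : 0 ≤ ca := Real.rpow_nonneg (by positivity) _
  have hcb0 : 0 ≤ cb := Real.rpow_nonneg (by positivity) _
  have hAA : fdot A A = a^2 := by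
    rw [ha', fnorm, Real.sq_sqrt (by positivity)]
    simp [fdot, sq]
  have hBB : fdot B B = b^2 := by
    rw [hb', fnorm, Real.sq_sqrt (by positivity)]
    simp [fdot, sq]
  have hCS : fdot A B ≤ a * b := by
    have h2 : (fdot A B)^2 ≤ (∑ i, ∑ j, (A i j)^2) * (∑ i, ∑ j, (B i j)^2) := by
      have h := Finset.sum_mul_sq_le_sq_mul_sq (Finset.univ : Finset (Fin 3 × Fin 3))
        (fun p => A p.1 p.2) (fun p => B p.1 p.2)
      simpa [fdot, Fintype.sum_prod_type] using h
    have h3 : fdot A B ≤ Real.sqrt ((∑ i, ∑ j, (A i j)^2) * (∑ i, ∑ j, (B i j)^2)) :=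
      calc fdot A B ≤ |fdot A B| := le_abs_self _
        _ = Real.sqrt ((fdot A B)^2) := (Real.sqrt_sq_eq_abs _).symm
        _ ≤ _ := Real.sqrt_le_sqrt h2
    rw [Real.sqrt_mul (by positivity)] at h3
    simpa [ha', hb', fnorm] using h3
  have hexp : fdot (stressReg q κ A - stressReg q κ B) (A - B)
      = ca * fdot A A - ca * fdot A B - cb * fdot A B + cb * fdot B B := by
    simp only [stressReg, ← ha', ← hb', ← hca', ← hcb', fdot, Matrix.sub_apply,
      Matrix.smul_apply, smul_eq_mul, Fin.sum_univ_succ, Fin.sum_univ_zero]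
    ring
  have hkey : 0 ≤ (ca * a - cb * b) * (a - b) := by
    rcases le_total b a with h | h
    · have := key_scalar (p := (q-2)/2) (κ := κ) (by linarith) hκ hb0 h
      rw [← hca', ← hcb'] at this
      nlinarith
    · have := key_scalar (p := (q-2)/2) (κ := κ) (by linarith) hκ ha0 h
      rw [← hca', ← hcb'] at this
      nlinarith
  rw [hexp, hAA, hBB]
  nlinarith [mul_nonneg (add_nonneg hca0 hcb0) (sub_nonneg.mpr hCS)]
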